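/- Every λ-quiddity over ⟨1/√2⟩ has even size; that is, if n ≥ 1 and (k_1/√2,…,k_n/√2) with k_1,…,k_n ∈ ℤ satisfies M_n(k_1/√2,…,k_n/√2) = ±Id, then n is even. -/
import Mathlib


open Matrix Polynomial

noncomputable section

/-- The elementary matrix [[a, -1], [1, 0]]. -/
def matE (a : ℂ) : Matrix (Fin 2) (Fin 2) ℂ := !![a, -1; 1, 0]

/-- M_n(a_1, …, a_n) = matE a_n * matE a_{n-1} * ⋯ * matE a_1, for the list [a_1, …, a_n]. -/
def Mlist (l : List ℂ) : Matrix (Fin 2) (Fin 2) ℂ := (l.reverse.map matE).prod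

/-- A λ-quiddity over R : a nonempty tuple of elements of R with M_n(a_1,…,a_n) = ±Id. -/
def IsQuiddity (R : Set ℂ) (l : List ℂ) : Prop :=
  l ≠ [] ∧ (∀ x ∈ l, x ∈ R) ∧ (Mlist l = 1 ∨ Mlist l = -1)

/-- (a_1,…,a_n) ⊕ (b_1,…,b_m) := (a_1+b_m, a_2,…,a_{n-1}, a_n+b_1, b_2,…,b_{m-1}). -/
def oplus (a b : List ℂ) : List ℂ :=
  (a.headI + b.getLastD 0) ::
    (a.tail.dropLast ++ (a.getLastD 0 + b.headI) :: b.tail.dropLast)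

/-- b is obtained from a by a cyclic permutation of a or of the reversal of a. -/
def CyclicEquiv (a b : List ℂ) : Prop :=
  (∃ k, b = a.rotate k) ∨ (∃ k, b = a.reverse.rotate k)

/-- A λ-quiddity c over R is reducible if c ∼ (a_1,…,a_m) ⊕ (b_1,…,b_l) with
(a_1,…,a_m) a tuple of elements of R, (b_1,…,b_l) a λ-quiddity over R, m ≥ 3 and l ≥ 3. -/
def ReducibleQuiddity (R : Set ℂ) (c : List ℂ) : Prop :=
  ∃ a b : List ℂ, (∀ x ∈ a, x ∈ R) ∧ IsQuiddity R b ∧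
    3 ≤ a.length ∧ 3 ≤ b.length ∧ CyclicEquiv c (oplus a b)

/-- The irreducible λ-quiddities over R : the λ-quiddities of size ≥ 3 which are not
reducible (those of size < 3, i.e. (0,0), are by convention not irreducible). -/
def IrreducibleQuiddity (R : Set ℂ) (c : List ℂ) : Prop :=
  IsQuiddity R c ∧ 3 ≤ c.length ∧ ¬ ReducibleQuiddity R c

/-- The subgroup ⟨w⟩ = {kw : k ∈ ℤ} of (ℂ, +), as a set. -/
def subgroupGen (w : ℂ) : Set ℂ := {x | ∃ k : ℤ, x = (k : ℂ) * w}


def Qmat (k : ℤ) : Matrix (Fin 2) (Fin 2) ℤ := !![k, -1; 2, 0]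
def Qp (ks : List ℤ) : Matrix (Fin 2) (Fin 2) ℤ := (ks.reverse.map Qmat).prod

def cc : ℂ := ((Real.sqrt 2 : ℝ) : ℂ)
def Dm : Matrix (Fin 2) (Fin 2) ℂ := !![1, 0; 0, cc]
def Dinv : Matrix (Fin 2) (Fin 2) ℂ := !![1, 0; 0, cc⁻¹]

lemma cc_ne : cc ≠ 0 := by
  simp [cc, Complex.ofReal_ne_zero]

lemma cc_sq : cc ^ 2 = 2 := by
  rw [cc, ← Complex.ofReal_pow, Real.sq_sqrt (by norm_num : (0:ℝ) ≤ 2)]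
  norm_num

lemma mapmul (A B : Matrix (Fin 2) (Fin 2) ℤ) :
    (A * B).map (Int.cast : ℤ → ℂ) = A.map Int.cast * B.map Int.cast := by
  simpa using Matrix.map_mul (L := A) (M := B) (f := Int.castRingHom ℂ)

lemma DDinv : Dm * Dinv = 1 := by
  have := cc_ne
  ext i j
  fin_cases i <;> fin_cases j <;>
    simp [Dm, Dinv, Matrix.mul_apply, Fin.sum_univ_two, mul_inv_cancel₀ cc_ne]

lemma DinvD : Dinv * Dm = 1 := by
  ext i j
  fin_cases i <;> fin_cases j <;>
    simp [Dm, Dinv, Matrix.mul_apply, Fin.sum_univ_two, inv_mul_cancel₀ cc_ne]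

lemma Mlist_cons (a : ℂ) (l : List ℂ) : Mlist (a :: l) = Mlist l * matE a := by
  simp [Mlist]

lemma Qp_cons (k : ℤ) (ks : List ℤ) : Qp (k :: ks) = Qp ks * Qmat k := by
  simp [Qp]

lemma conj_single (k : ℤ) :
    Dm * matE ((k : ℂ) * ((1 / Real.sqrt 2 : ℝ) : ℂ)) * Dinv
      = cc⁻¹ • ((Qmat k).map (Int.cast : ℤ → ℂ)) := by
  have h2 : cc * cc = 2 := by have := cc_sq; rwa [sq] at this
  ext i j
  fin_cases i <;> fin_cases j <;>
    · simp [Dm, Dinv, matE, Qmat, Matrix.mul_apply, Fin.sum_univ_two, cc]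
      try field_simp
      try rw [← h2]; ring_nf
      try simp [cc]

lemma keyA (ks : List ℤ) :
    Dm * Mlist (ks.map fun k => (k : ℂ) * ((1 / Real.sqrt 2 : ℝ) : ℂ)) * Dinv
      = (cc⁻¹) ^ ks.length • ((Qp ks).map (Int.cast : ℤ → ℂ)) := by
  induction ks with
  | nil => simp [Mlist, Qp, DDinv]
  | cons k ks ih =>
      have : Mlist ((k :: ks).map fun k => (k : ℂ) * ((1 / Real.sqrt 2 : ℝ) : ℂ))
          = Mlist (ks.map fun k => (k : ℂ) * ((1 / Real.sqrt 2 : ℝ) : ℂ))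
            * matE ((k : ℂ) * ((1 / Real.sqrt 2 : ℝ) : ℂ)) := by
        simp [Mlist]
      rw [List.length_cons, this, Qp_cons]
      calc Dm * (Mlist (ks.map fun k => (k : ℂ) * ((1 / Real.sqrt 2 : ℝ) : ℂ))
            * matE ((k : ℂ) * ((1 / Real.sqrt 2 : ℝ) : ℂ))) * Dinv
          = (Dm * Mlist (ks.map fun k => (k : ℂ) * ((1 / Real.sqrt 2 : ℝ) : ℂ)) * Dinv)
            * (Dm * matE ((k : ℂ) * ((1 / Real.sqrt 2 : ℝ) : ℂ)) * Dinv) := by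
            rw [show (Dm * Mlist (ks.map fun k => (k : ℂ) * ((1 / Real.sqrt 2 : ℝ) : ℂ)) * Dinv)
              * (Dm * matE ((k : ℂ) * ((1 / Real.sqrt 2 : ℝ) : ℂ)) * Dinv)
              = Dm * Mlist (ks.map fun k => (k : ℂ) * ((1 / Real.sqrt 2 : ℝ) : ℂ))
                * (Dinv * Dm) * matE ((k : ℂ) * ((1 / Real.sqrt 2 : ℝ) : ℂ)) * Dinv by
                noncomm_ring]
            rw [DinvD]
            noncomm_ring
        _ = ((cc⁻¹) ^ ks.length • ((Qp ks).map (Int.cast : ℤ → ℂ)))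
            * (cc⁻¹ • ((Qmat k).map (Int.cast : ℤ → ℂ))) := by rw [ih, conj_single]
        _ = (cc⁻¹) ^ (ks.length + 1) • ((Qp ks * Qmat k).map (Int.cast : ℤ → ℂ)) := by
            rw [mapmul, smul_mul_assoc, mul_smul_comm, smul_smul, pow_succ]


end

theorem stmt5 (n : ℕ) (hn : 1 ≤ n) (ks : List ℤ) (hlen : ks.length = n)
    (h : Mlist (ks.map fun k => (k : ℂ) * ((1 / Real.sqrt 2 : ℝ) : ℂ)) = 1 ∨
         Mlist (ks.map fun k => (k : ℂ) * ((1 / Real.sqrt 2 : ℝ) : ℂ)) = -1) :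
    Even n := by
  by_contra hodd
  rw [Nat.not_even_iff_odd] at hodd
  obtain ⟨m, rfl⟩ := hodd
  -- get the key equation
  have key := keyA ks
  have hent : ∃ ε : ℂ, (ε = 1 ∨ ε = -1) ∧
      ((Qp ks).map (Int.cast : ℤ → ℂ)) = (ε * cc ^ ks.length) • 1 := by
    rcases h with h | h
    · refine ⟨1, Or.inl rfl, ?_⟩
      rw [h] at key
      rw [show Dm * 1 * Dinv = 1 by rw [mul_one, DDinv]] at key
      have := congrArg (fun M => (cc ^ ks.length) • M) key.symm
      simp only [smul_smul, inv_pow, mul_inv_cancel₀ (pow_ne_zero ks.length cc_ne),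
        one_smul] at this
      rw [this, one_mul]
    · refine ⟨-1, Or.inr rfl, ?_⟩
      rw [h] at key
      rw [show Dm * (-1) * Dinv = -1 by rw [mul_neg_one, neg_mul, DDinv]] at key
      have := congrArg (fun M => (cc ^ ks.length) • M) key.symm
      simp only [smul_smul, inv_pow, mul_inv_cancel₀ (pow_ne_zero ks.length cc_ne),
        one_smul] at this
      rw [this, neg_one_mul, neg_smul, smul_neg]
  obtain ⟨ε, hε, heq⟩ := hent
  have h00 := congrFun (congrFun heq 0) 0
  simp [Matrix.map_apply, Matrix.smul_apply, Matrix.one_apply] at h00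
  -- h00 : ((Qp ks 0 0 : ℤ) : ℂ) = ε * cc ^ ks.length
  have hpow : cc ^ ks.length = (2 : ℂ) ^ m * cc := by
    rw [hlen, pow_succ, pow_mul, cc_sq]
  set q : ℤ := Qp ks 0 0 with hq
  have hirr : Irrational (Real.sqrt 2) := irrational_sqrt_two
  have h2m : ((2 : ℝ) ^ m) ≠ 0 := by positivity
  rcases hε with rfl | rfl
  · rw [hpow, one_mul] at h00

    have : ((q : ℝ) : ℂ) = (((2 : ℝ) ^ m * Real.sqrt 2 : ℝ) : ℂ) := by
      push_cast
      rw [h00]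
      simp [cc]
    have hr : (q : ℝ) = (2 : ℝ) ^ m * Real.sqrt 2 := Complex.ofReal_injective this
    have : Real.sqrt 2 = ((q : ℚ) / (2 : ℚ) ^ m : ℚ) := by
      push_cast
      field_simp
      linarith [hr]
    exact hirr ⟨_, this.symm⟩
  · rw [hpow] at h00
    have : ((q : ℝ) : ℂ) = ((-((2 : ℝ) ^ m * Real.sqrt 2) : ℝ) : ℂ) := by
      push_cast
      rw [h00]
      simp [cc]
      try ring
    have hr : (q : ℝ) = -((2 : ℝ) ^ m * Real.sqrt 2) := Complex.ofReal_injective this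
    have : Real.sqrt 2 = ((-q : ℚ) / (2 : ℚ) ^ m : ℚ) := by
      push_cast
      field_simp
      linarith [hr]
    exact hirr ⟨_, this.symm⟩
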